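/- In ℝ³ with N ≥ 3 points p₁,…,p_N of which at least three are not collinear, the six vectors v_{T_x}, v_{T_y}, v_{T_z}, v_{R_x}, v_{R_y}, v_{R_z} in ℝ^{3N} are linearly independent, where v_{T_ξ} = 1_N ⊗ e_ξ and v_{R_ξ} = col(e_ξ × p₁, …, e_ξ × p_N) for ξ ∈ {x,y,z}. -/

import Mathlib

/-!
A linear combination of the six vectors is the velocity field `pₙ ↦ t + ω × pₙ` of an
infinitesimal rigid motion, with `t` and `ω` the coefficient triples. If it vanishes at every
point, then `ω × (pⱼ - pᵢ) = ω × (pₖ - pᵢ) = 0`; two vectors killed by `ω × ·` are both multiples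
of `ω` unless `ω = 0`, so the non-collinearity forces `ω = 0`, and then `t = 0`.
-/

open Matrix

lemma eq_zero_of_cross_eq_zero_of_linearIndependent {F : Type*} [Field F] {ω u v : Fin 3 → F}
    (huv : LinearIndependent F ![u, v]) (hu : ω ⨯₃ u = 0) (hv : ω ⨯₃ v = 0) : ω = 0 := by
  by_contra hω
  have multiple_of_ω : ∀ w, ω ⨯₃ w = 0 → ∃ a : F, a • ω = w := fun w hw => by
    have hdep := mt crossProduct_ne_zero_iff_linearIndependent.mpr (not_not.mpr hw)
    simpa [LinearIndependent.pair_iff' hω] using hdep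
  obtain ⟨a, rfl⟩ := multiple_of_ω u hu
  obtain ⟨b, rfl⟩ := multiple_of_ω v hv
  have hb : b = 0 := (LinearIndependent.pair_iff.mp huv b (-a)
    (by rw [smul_smul, smul_smul, neg_mul, neg_smul, mul_comm, add_neg_cancel])).1
  exact huv.ne_zero 1 (by simp [hb])

lemma rigid_motion_eq_zero {F : Type*} [Field F] {N : ℕ} {p : Fin N → Fin 3 → F}
    (hnc : ∃ i j k : Fin N, LinearIndependent F ![p j - p i, p k - p i]) {t ω : Fin 3 → F}
    (h : ∀ n, t + ω ⨯₃ p n = 0) : t = 0 ∧ ω = 0 := by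
  obtain ⟨i, j, k, hind⟩ := hnc
  have hrel : ∀ n, ω ⨯₃ (p n - p i) = 0 := fun n => by
    rw [map_sub, ← add_sub_add_left_eq_sub _ _ t, h, h, sub_self]
  have hω : ω = 0 := eq_zero_of_cross_eq_zero_of_linearIndependent hind (hrel j) (hrel k)
  refine ⟨?_, hω⟩
  simpa [hω] using h i

lemma sum_smul_rigid_basis {R : Type*} [CommRing R] {N : ℕ} (p : Fin N → Fin 3 → R)
    (g : Fin 6 → R) :
    ∑ m, g m • (![(fun _ => ![1, 0, 0] : Fin N → Fin 3 → R),
         (fun _ => ![0, 1, 0]),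
         (fun _ => ![0, 0, 1]),
         (fun i => crossProduct ![1, 0, 0] (p i)),
         (fun i => crossProduct ![0, 1, 0] (p i)),
         (fun i => crossProduct ![0, 0, 1] (p i))] m) =
      fun n => ![g 0, g 1, g 2] + ![g 3, g 4, g 5] ⨯₃ p n := by
  funext n ξ
  fin_cases ξ <;> simp [Fin.sum_univ_six, cross_apply] <;> ring

theorem stmt_4_general {N : ℕ} (p : Fin N → Fin 3 → ℝ)
    (hnc : ∃ i j k : Fin N, LinearIndependent ℝ ![p j - p i, p k - p i]) :
    LinearIndependent ℝ
      (![(fun _ => ![1, 0, 0] : Fin N → Fin 3 → ℝ),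
         (fun _ => ![0, 1, 0]),
         (fun _ => ![0, 0, 1]),
         (fun i => crossProduct ![1, 0, 0] (p i)),
         (fun i => crossProduct ![0, 1, 0] (p i)),
         (fun i => crossProduct ![0, 0, 1] (p i))]) := by
  rw [Fintype.linearIndependent_iff]
  intro g hg
  rw [sum_smul_rigid_basis] at hg
  obtain ⟨ht, hω⟩ := rigid_motion_eq_zero hnc (t := ![g 0, g 1, g 2]) (ω := ![g 3, g 4, g 5])
    (fun n => congrFun hg n)
  simp only [cons_eq_zero_iff, zero_empty, and_true] at ht hω
  obtain ⟨h0, h1, h2⟩ := ht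
  obtain ⟨h3, h4, h5⟩ := hω
  intro m
  fin_cases m <;> assumption

theorem stmt_4 {N : ℕ} (hN : 3 ≤ N) (p : Fin N → Fin 3 → ℝ)
    (hnc : ∃ i j k : Fin N, LinearIndependent ℝ ![p j - p i, p k - p i]) :
    LinearIndependent ℝ
      (![(fun _ => ![1, 0, 0] : Fin N → Fin 3 → ℝ),
         (fun _ => ![0, 1, 0]),
         (fun _ => ![0, 0, 1]),
         (fun i => crossProduct ![1, 0, 0] (p i)),
         (fun i => crossProduct ![0, 1, 0] (p i)),
         (fun i => crossProduct ![0, 0, 1] (p i))]) :=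
  stmt_4_general p hnc
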